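/- (Remark 2: Jacobi differential equation via the product representation.) For every integer k ≥ 0, the polynomial p_k = a₁a₂⋯aₖ 1 satisfies (x²−1)·p_k″ + ((α+β+2)·x + (α−β))·p_k′ = k(α+β+k+1)·p_k. -/
import Mathlib


open Polynomial

/-- The operator `aⱼ p = ((α+β+2j)·x + (α−β))·p + (x²−1)·p′` on `ℝ[x]`. -/
noncomputable def aOp (α β : ℝ) (j : ℕ) (p : Polynomial ℝ) : Polynomial ℝ :=
  (Polynomial.C (α + β + 2 * (j : ℝ)) * Polynomial.X + Polynomial.C (α - β)) * p +
    (Polynomial.X ^ 2 - 1) * Polynomial.derivative p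

/-- The composition `a₁a₂⋯aₖ` on `ℝ[x]` (identity for `k = 0`). -/
noncomputable def aIter (α β : ℝ) : ℕ → Polynomial ℝ → Polynomial ℝ
  | 0 => id
  | (k + 1) => fun p => aIter α β k (aOp α β (k + 1) p)

/-- The polynomial `pₖ = a₁a₂⋯aₖ 1` (with `p₀ = 1`); up to a nonzero constant factor it is
the Jacobi polynomial `P_k^{(α,β)}`. -/
noncomputable def pJ (α β : ℝ) (k : ℕ) : Polynomial ℝ :=
  aIter α β k 1

noncomputable def Hop (α β c : ℝ) (p : Polynomial ℝ) : Polynomial ℝ :=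
  (Polynomial.X ^ 2 - 1) * Polynomial.derivative (Polynomial.derivative p) +
    (Polynomial.C c * Polynomial.X + Polynomial.C (α - β)) * Polynomial.derivative p

lemma aIter_succ (α β : ℝ) (k : ℕ) (p : Polynomial ℝ) :
    aIter α β (k + 1) p = aIter α β k (aOp α β (k + 1) p) := rfl

lemma aOp_add (α β : ℝ) (j : ℕ) (p q : Polynomial ℝ) :
    aOp α β j (p + q) = aOp α β j p + aOp α β j q := by
  simp [aOp]; ring

lemma aOp_smulC (α β : ℝ) (j : ℕ) (c : ℝ) (p : Polynomial ℝ) :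
    aOp α β j (Polynomial.C c * p) = Polynomial.C c * aOp α β j p := by
  simp [aOp]; ring

lemma aIter_add (α β : ℝ) (k : ℕ) (p q : Polynomial ℝ) :
    aIter α β k (p + q) = aIter α β k p + aIter α β k q := by
  induction k generalizing p q with
  | zero => rfl
  | succ n ih => simp [aIter, aOp_add, ih]

lemma aIter_smulC (α β : ℝ) (k : ℕ) (c : ℝ) (p : Polynomial ℝ) :
    aIter α β k (Polynomial.C c * p) = Polynomial.C c * aIter α β k p := by
  induction k generalizing p with
  | zero => rfl
  | succ n ih => simp [aIter, aOp_smulC, ih]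

lemma key (α β : ℝ) (j : ℕ) (p : Polynomial ℝ) :
    Hop α β (α + β + 2 * (j : ℝ)) (aOp α β j p) =
      aOp α β j (Hop α β (α + β + 2 * ((j : ℝ) + 1)) p) +
        Polynomial.C (α + β + 2 * (j : ℝ)) * aOp α β j p := by
  simp only [Hop, aOp, derivative_add, derivative_mul, derivative_C, derivative_X,
    derivative_sub, derivative_one, Polynomial.derivative_X_pow, derivative_ofNat,
    derivative_zero, Polynomial.C_add, Polynomial.C_sub, Polynomial.C_mul, Polynomial.C_1,
    map_ofNat, Nat.cast_ofNat, Nat.cast_one]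
  ring_nf
  simp only [Polynomial.C_1, map_one, one_mul, mul_one]

lemma main (α β : ℝ) (k : ℕ) (p : Polynomial ℝ) :
    Hop α β (α + β + 2) (aIter α β k p) =
      aIter α β k (Hop α β (α + β + 2 * ((k : ℝ) + 1)) p) +
        Polynomial.C ((k : ℝ) * (α + β + (k : ℝ) + 1)) * aIter α β k p := by
  induction k generalizing p with
  | zero => simp [aIter, Hop]
  | succ n ih =>
    rw [aIter_succ, ih]
    have e1 : α + β + 2 * ((n : ℝ) + 1) = α + β + 2 * (((n + 1 : ℕ) : ℝ)) := by
      push_cast; ring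
    rw [e1, key α β (n + 1) p, aIter_add, aIter_smulC, ← aIter_succ, ← aIter_succ]
    have e2 : ((n + 1 : ℕ) : ℝ) * (α + β + ((n + 1 : ℕ) : ℝ) + 1) =
        (n : ℝ) * (α + β + (n : ℝ) + 1) + (α + β + 2 * ((n + 1 : ℕ) : ℝ)) := by
      push_cast; ring
    have e3 : α + β + 2 * (((n + 1 : ℕ) : ℝ) + 1) = α + β + 2 * (((n : ℝ) + 1) + 1) := by
      push_cast; ring
    rw [e2, e3]
    simp only [Polynomial.C_add, add_mul]
    abel

lemma aIter_zero (α β : ℝ) (k : ℕ) : aIter α β k 0 = 0 := by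
  simpa using aIter_smulC α β k 0 0

/-- (Remark 2: Jacobi differential equation via the product representation.)
For every `k ≥ 0`, the polynomial `pₖ = a₁a₂⋯aₖ 1` satisfies
`(x²−1)·pₖ″ + ((α+β+2)·x + (α−β))·pₖ′ = k(α+β+k+1)·pₖ`. -/
theorem stmt_10 (α β : ℝ) (k : ℕ) :
    (Polynomial.X ^ 2 - 1) * Polynomial.derivative (Polynomial.derivative (pJ α β k)) +
        (Polynomial.C (α + β + 2) * Polynomial.X + Polynomial.C (α - β)) *
          Polynomial.derivative (pJ α β k) =
      Polynomial.C ((k : ℝ) * (α + β + (k : ℝ) + 1)) * pJ α β k := by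
  have h := main α β k 1
  have h0 : Hop α β (α + β + 2 * ((k : ℝ) + 1)) (1 : Polynomial ℝ) = 0 := by
    simp [Hop]
  rw [h0, aIter_zero, zero_add] at h
  simpa [Hop, pJ] using h
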